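/- arXiv:2104.13753 — 3 statements merged into one kernel-verified Lean document; each statement's English description precedes it below -/
import Mathlib

section
/- Let μ be a nonzero finite Borel measure on ℝ^d with compact support, λ ≥ 0, and fix a Borel set A ⊂ ℝ^d with μ(A) > 0 such that μ|_A is λ-cohesive. Define u(x) := C_μ(A) if x ∈ A and u(x) := x if x ∉ A, so that M_u(μ) is the measure obtained from μ by consolidating all of the mass in A at C_μ(A). Then for μ-a.e. x, u_{μ,λ}(x) = u_{M_u(μ),λ}(u(x)). -/
open MeasureTheory Filter Topology ProbabilityTheory
open scoped ENNReal NNReal symmDiff Classical RealInnerProductSpace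

noncomputable section

/-- `d`-dimensional Euclidean space. -/
abbrev Euc (d : ℕ) : Type := EuclideanSpace ℝ (Fin d)

/-- The sum-of-norms clustering functional
`J_{μ,λ}(u) = ∫ |u x - x|² dμ + λ ∬ |u x - u y| dμ dμ`. -/
def SONJ {d : ℕ} (μ : Measure (Euc d)) (lam : ℝ) (u : Euc d → Euc d) : ℝ :=
  ∫ x, ‖u x - x‖ ^ 2 ∂μ + lam * ∫ x, ∫ y, ‖u x - u y‖ ∂μ ∂μ

/-- `u` is a minimizer of `J_{μ,λ}` over `L²(μ; ℝ^d)`.  Since `J_{μ,λ}` has a unique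
minimizer (up to `μ`-a.e. equality), this predicate characterizes `u_{μ,λ}`. -/
def IsSONMin {d : ℕ} (μ : Measure (Euc d)) (lam : ℝ) (u : Euc d → Euc d) : Prop :=
  MemLp u 2 μ ∧ ∀ v : Euc d → Euc d, MemLp v 2 μ → SONJ μ lam u ≤ SONJ μ lam v

/-- `μ` is `λ`-cohesive: the minimizer of `J_{μ,λ}` is `μ`-a.e. constant. -/
def Cohesive {d : ℕ} (μ : Measure (Euc d)) (lam : ℝ) : Prop :=
  ∃ u : Euc d → Euc d, IsSONMin μ lam u ∧ ∃ c : Euc d, u =ᵐ[μ] fun _ => c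

/-- `μ` is `λ`-shattered: the minimizer of `J_{μ,λ}` agrees `μ`-a.e. with a measurable
injection. -/
def Shattered {d : ℕ} (μ : Measure (Euc d)) (lam : ℝ) : Prop :=
  ∃ u : Euc d → Euc d, IsSONMin μ lam u ∧
    ∃ v : Euc d → Euc d, Measurable v ∧ Function.Injective v ∧ u =ᵐ[μ] v

/-- `λ₁(μ) = inf {λ ≥ 0 | μ is λ-cohesive}`. -/
def lambda1 {d : ℕ} (μ : Measure (Euc d)) : ℝ :=
  sInf {lam : ℝ | 0 ≤ lam ∧ Cohesive μ lam}

/-- `λ⋆(μ) = sup {λ ≥ 0 | μ is λ-shattered}`. -/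
def lambdaStar {d : ℕ} (μ : Measure (Euc d)) : ℝ :=
  sSup {lam : ℝ | 0 ≤ lam ∧ Shattered μ lam}

/-- The level set (cluster) of `u` containing `x`: `V_{u,x} = u⁻¹({u x})`. -/
def Vset {d : ℕ} (u : Euc d → Euc d) (x : Euc d) : Set (Euc d) := {y | u y = u x}

/-- The `μ`-centroid of a set `V`: the `μ`-average of `V` if `μ V > 0`, and the unique
element of `V` if `V` is a singleton (otherwise junk). -/
def muCentroid {d : ℕ} (μ : Measure (Euc d)) (V : Set (Euc d)) : Euc d :=
  if 0 < μ V then (μ V).toReal⁻¹ • ∫ x in V, x ∂μ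
  else if h : ∃ x, V = {x} then h.choose else 0

/-- The first canonical basis vector of `ℝ^d`. -/
def e1 (d : ℕ) : Euc d := if h : 0 < d then EuclideanSpace.single (⟨0, h⟩ : Fin d) 1 else 0

/-- The constant `γ_d` from the paper. -/
def gammaD (d : ℕ) : ℝ :=
  ((2 * (d : ℝ) + 1) / (2 * (d : ℝ) + 4)) *
    (if Even d then
      (((d : ℝ) + 1) * ((Nat.factorial (2 * d) : ℝ)) * Real.pi) /
        (2 ^ (3 * d) * ((Nat.factorial (d / 2) : ℝ)) ^ 2 * ((Nat.factorial d : ℝ)))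
    else
      (((d : ℝ) + 1) * ((Nat.factorial ((d - 1) / 2) : ℝ)) ^ 2 *
          ((Nat.factorial (2 * d) : ℝ))) /
        (2 ^ d * ((Nat.factorial d : ℝ)) ^ 3))

/-- The union of the two open unit balls centered at `± r e₁`. -/
def ballUnion (d : ℕ) (r : ℝ) : Set (Euc d) :=
  Metric.ball (-(r • e1 d)) 1 ∪ Metric.ball (r • e1 d) 1

/-- The empirical measure `μ_N = N⁻¹ ∑_{n<N} δ_{X n ω}`. -/
def empMeas {d : ℕ} {Ω : Type*} (X : ℕ → Ω → Euc d) (N : ℕ) (ω : Ω) : Measure (Euc d) :=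
  (N : ℝ≥0∞)⁻¹ • ∑ n ∈ Finset.range N, Measure.dirac (X n ω)

/-!
Write `M` for the map collapsing `A` to its centroid `c` and fixing `Aᶜ`, and `ν = M_*μ`.
For every `w`, `J_μ(w ∘ M) = J_ν(w) + ∫_A ‖c - x‖² dμ`: the fusion term is transported by `M`, and
since `c` is the centroid of `A` the fidelity term only gains the moment of inertia of `A`
(Huygens–Steiner). Conversely every `u` is beaten by some `w ∘ M`: replace `u` on the fibre
`A ∪ {c}` of `M` by its average. The fusion between the fibre and its complement can only
decrease (Jensen), and the cost inside the fibre decreases because `μ|_A` is cohesive and the only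
extra mass sits at its centroid. Hence `v ∘ M` minimizes `J_μ` whenever `v` minimizes `J_ν`, and
the minimizer of the strictly convex `J_μ` is unique.
-/

open Set

section Fusion

variable {α β E : Type*} [MeasurableSpace α] [MeasurableSpace β] [NormedAddCommGroup E]

def fusionPenalty (μ ν : Measure α) (f : α → E) : ℝ :=
  ∫ x, ∫ y, ‖f x - f y‖ ∂ν ∂μ

variable {μ μ₁ μ₂ ν ν₁ ν₂ : Measure α} {f g : α → E}

lemma integrable_norm_const_sub [IsFiniteMeasure μ] (hf : Integrable f μ) (p : E) :
    Integrable (fun x => ‖p - f x‖) μ :=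
  ((integrable_const p).sub hf).norm

lemma integrable_norm_sub_prod {ν : Measure β} [IsFiniteMeasure μ] [IsFiniteMeasure ν]
    {g : β → E} (hf : Integrable f μ) (hg : Integrable g ν) :
    Integrable (fun p : α × β => ‖f p.1 - g p.2‖) (μ.prod ν) := by
  refine Integrable.mono' ((hf.norm.comp_fst ν).add (hg.norm.comp_snd μ))
    (hf.1.comp_fst.sub hg.1.comp_snd).norm (ae_of_all _ fun p => ?_)
  simpa using norm_sub_le (f p.1) (g p.2)

lemma integrable_integral_norm_sub {ν : Measure β} [IsFiniteMeasure μ] [IsFiniteMeasure ν]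
    {g : β → E} (hf : Integrable f μ) (hg : Integrable g ν) :
    Integrable (fun x => ∫ y, ‖f x - g y‖ ∂ν) μ :=
  (integrable_norm_sub_prod hf hg).integral_prod_left

lemma fusionPenalty_nonneg : 0 ≤ fusionPenalty μ ν f :=
  integral_nonneg fun _ => integral_nonneg fun _ => norm_nonneg _

lemma fusionPenalty_congr_ae (hμ : f =ᵐ[μ] g) (hν : f =ᵐ[ν] g) :
    fusionPenalty μ ν f = fusionPenalty μ ν g := by
  refine integral_congr_ae (hμ.mono fun x hx => integral_congr_ae (hν.mono fun y hy => ?_))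
  simp only [hx, hy]

lemma fusionPenalty_comm [IsFiniteMeasure μ] [IsFiniteMeasure ν] (hμ : Integrable f μ)
    (hν : Integrable f ν) : fusionPenalty μ ν f = fusionPenalty ν μ f := by
  rw [fusionPenalty, integral_integral_swap (integrable_norm_sub_prod hμ hν)]
  exact integral_congr_ae (ae_of_all _ fun y => integral_congr_ae (ae_of_all _ fun x =>
    norm_sub_rev (f x) (f y)))

lemma fusionPenalty_add_left [IsFiniteMeasure μ₁] [IsFiniteMeasure μ₂] [IsFiniteMeasure ν]
    (h₁ : Integrable f μ₁) (h₂ : Integrable f μ₂) (hν : Integrable f ν) :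
    fusionPenalty (μ₁ + μ₂) ν f = fusionPenalty μ₁ ν f + fusionPenalty μ₂ ν f :=
  integral_add_measure (integrable_integral_norm_sub h₁ hν) (integrable_integral_norm_sub h₂ hν)

lemma fusionPenalty_add_right [IsFiniteMeasure μ] [IsFiniteMeasure ν₁] [IsFiniteMeasure ν₂]
    (hμ : Integrable f μ) (h₁ : Integrable f ν₁) (h₂ : Integrable f ν₂) :
    fusionPenalty μ (ν₁ + ν₂) f = fusionPenalty μ ν₁ f + fusionPenalty μ ν₂ f := by
  rw [fusionPenalty, fusionPenalty, fusionPenalty, ← integral_add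
    (integrable_integral_norm_sub hμ h₁) (integrable_integral_norm_sub hμ h₂)]
  congr 1
  funext x
  exact integral_add_measure (integrable_norm_const_sub h₁ _) (integrable_norm_const_sub h₂ _)

lemma fusionPenalty_map [IsFiniteMeasure μ] [IsFiniteMeasure ν] {T : α → β} (hT : Measurable T)
    {w : β → E} (hμ : Integrable w (μ.map T)) (hν : Integrable w (ν.map T)) :
    fusionPenalty (μ.map T) (ν.map T) w = fusionPenalty μ ν (w ∘ T) := by
  rw [fusionPenalty, integral_map hT.aemeasurable (integrable_integral_norm_sub hμ hν).1]
  congr 1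
  funext x
  exact integral_map hT.aemeasurable (integrable_norm_const_sub hν _).1

lemma fusionPenalty_midpoint_le [NormedSpace ℝ E] [IsFiniteMeasure μ] [IsFiniteMeasure ν]
    (hfμ : Integrable f μ) (hfν : Integrable f ν) (hgμ : Integrable g μ) (hgν : Integrable g ν) :
    fusionPenalty μ ν (fun x => (2 : ℝ)⁻¹ • (f x + g x))
      ≤ 2⁻¹ * fusionPenalty μ ν f + 2⁻¹ * fusionPenalty μ ν g := by
  have hinner (x : α) : ∫ y, ‖(2 : ℝ)⁻¹ • (f x + g x) - (2 : ℝ)⁻¹ • (f y + g y)‖ ∂ν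
      ≤ 2⁻¹ * ∫ y, ‖f x - f y‖ ∂ν + 2⁻¹ * ∫ y, ‖g x - g y‖ ∂ν := by
    rw [← integral_const_mul, ← integral_const_mul, ← integral_add
      ((integrable_norm_const_sub hfν _).const_mul _)
      ((integrable_norm_const_sub hgν _).const_mul _)]
    refine integral_mono (integrable_norm_const_sub (Integrable.smul (2⁻¹ : ℝ) (hfν.add hgν)) _)
      (((integrable_norm_const_sub hfν _).const_mul _).add
        ((integrable_norm_const_sub hgν _).const_mul _)) fun y => ?_
    calc ‖(2 : ℝ)⁻¹ • (f x + g x) - (2 : ℝ)⁻¹ • (f y + g y)‖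
        = ‖(2 : ℝ)⁻¹ • (f x - f y) + (2 : ℝ)⁻¹ • (g x - g y)‖ := by congr 1; module
      _ ≤ 2⁻¹ * ‖f x - f y‖ + 2⁻¹ * ‖g x - g y‖ := by
        refine (norm_add_le _ _).trans_eq ?_
        rw [norm_smul, norm_smul, Real.norm_of_nonneg (by norm_num)]
  rw [fusionPenalty, fusionPenalty, fusionPenalty, ← integral_const_mul, ← integral_const_mul,
    ← integral_add ((integrable_integral_norm_sub hfμ hfν).const_mul _)
      ((integrable_integral_norm_sub hgμ hgν).const_mul _)]
  exact integral_mono (integrable_integral_norm_sub (Integrable.smul (2⁻¹ : ℝ) (hfμ.add hgμ))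
    (Integrable.smul (2⁻¹ : ℝ) (hfν.add hgν)))
    (((integrable_integral_norm_sub hfμ hfν).const_mul _).add
      ((integrable_integral_norm_sub hgμ hgν).const_mul _)) hinner

lemma mul_norm_sub_average_le [NormedSpace ℝ E] [CompleteSpace E] [IsFiniteMeasure μ]
    (hf : Integrable f μ) (p : E) : μ.real univ * ‖p - ⨍ x, f x ∂μ‖ ≤ ∫ x, ‖p - f x‖ ∂μ :=
  calc μ.real univ * ‖p - ⨍ x, f x ∂μ‖ = ‖∫ x, (p - f x) ∂μ‖ := by
        rw [integral_sub (integrable_const p) hf, integral_const, ← measure_smul_average,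
          ← smul_sub, norm_smul, Real.norm_of_nonneg measureReal_nonneg]
    _ ≤ ∫ x, ‖p - f x‖ ∂μ := norm_integral_le_integral_norm _

end Fusion

section InnerProduct

variable {α E : Type*} [NormedAddCommGroup E] [InnerProductSpace ℝ E]

lemma mul_norm_sub_sq_le_of_smul_add_smul {a b : ℝ} {m p q : E} (ha : 0 ≤ a) (hb : 0 ≤ b)
    (hm : (a + b) • m = a • p + b • q) (c : E) :
    (a + b) * ‖m - c‖ ^ 2 ≤ a * ‖p - c‖ ^ 2 + b * ‖q - c‖ ^ 2 := by
  rcases (add_nonneg ha hb).eq_or_lt with hab | hab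
  · rw [← hab, zero_mul]
    positivity
  have hmc : (a + b) • (m - c) = a • (p - c) + b • (q - c) := by
    rw [smul_sub, hm]
    module
  have hsq : (a + b) ^ 2 * ‖m - c‖ ^ 2 + a * b * ‖p - q‖ ^ 2
      = (a + b) * (a * ‖p - c‖ ^ 2 + b * ‖q - c‖ ^ 2) := by
    have h₁ := congrArg (fun v => ‖v‖ ^ 2) hmc
    have h₂ : p - q = (p - c) - (q - c) := by abel
    simp only [norm_smul, mul_pow, Real.norm_eq_abs, sq_abs, norm_add_sq_real, inner_smul_left,
      inner_smul_right] at h₁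
    rw [h₂, norm_sub_sq_real (p - c)]
    simp only [RCLike.conj_to_real] at h₁
    nlinarith [h₁]
  nlinarith [mul_nonneg (mul_nonneg ha hb) (sq_nonneg ‖p - q‖)]

variable [CompleteSpace E] [MeasurableSpace α] {ρ : Measure α} [IsFiniteMeasure ρ] {g : α → E}

lemma integral_norm_sub_sq (hg : MemLp g 2 ρ) (b : E) :
    ∫ x, ‖b - g x‖ ^ 2 ∂ρ = ρ.real univ * ‖b‖ ^ 2 - 2 * ⟪b, ∫ x, g x ∂ρ⟫ + ∫ x, ‖g x‖ ^ 2 ∂ρ := by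
  have hgi := hg.integrable one_le_two
  have hinner : Integrable (fun x => 2 * ⟪b, g x⟫) ρ := (hgi.const_inner b).const_mul 2
  have hlin : Integrable (fun x => ‖b‖ ^ 2 - 2 * ⟪b, g x⟫) ρ := (integrable_const _).sub hinner
  simp_rw [norm_sub_sq_real]
  rw [integral_add hlin hg.norm.integrable_sq, integral_sub (integrable_const _) hinner,
    integral_const, integral_const_mul, integral_inner hgi, smul_eq_mul]

/-- Huygens–Steiner theorem. -/
lemma integral_norm_sub_sq_eq_add {m : E} (hg : MemLp g 2 ρ) (hm : ρ.real univ • m = ∫ x, g x ∂ρ)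
    (b : E) :
    ∫ x, ‖b - g x‖ ^ 2 ∂ρ = ρ.real univ * ‖b - m‖ ^ 2 + ∫ x, ‖m - g x‖ ^ 2 ∂ρ := by
  rw [integral_norm_sub_sq hg, integral_norm_sub_sq hg, ← hm, inner_smul_right, inner_smul_right,
    real_inner_self_eq_norm_sq, norm_sub_sq_real]
  ring

end InnerProduct

lemma memLp_id_of_isCompact {E : Type*} [NormedAddCommGroup E] [MeasurableSpace E]
    [OpensMeasurableSpace E] [SecondCountableTopology E] {μ : Measure E} [IsFiniteMeasure μ]
    (p : ℝ≥0∞) (h : ∃ K : Set E, IsCompact K ∧ μ Kᶜ = 0) : MemLp (fun x => x) p μ := by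
  obtain ⟨K, hK, hKc⟩ := h
  obtain ⟨R, hR⟩ := hK.isBounded.exists_norm_le
  exact MemLp.of_bound aestronglyMeasurable_id R (by filter_upwards [mem_ae_iff.2 hKc] using hR)

section SON

variable {d : ℕ} {μ ρ σ δ : Measure (Euc d)} {lam : ℝ} {u v : Euc d → Euc d}

lemma sonj_eq_fusionPenalty : SONJ μ lam u = ∫ x, ‖u x - x‖ ^ 2 ∂μ + lam * fusionPenalty μ μ u :=
  rfl

lemma sonj_const (b : Euc d) : SONJ μ lam (fun _ => b) = ∫ x, ‖b - x‖ ^ 2 ∂μ := by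
  simp [SONJ]

lemma sonj_congr_ae (h : u =ᵐ[μ] v) : SONJ μ lam u = SONJ μ lam v := by
  rw [sonj_eq_fusionPenalty, sonj_eq_fusionPenalty, fusionPenalty_congr_ae h h,
    integral_congr_ae (h.mono fun x hx => by simp only [hx] : ∀ᵐ x ∂μ,
      ‖u x - x‖ ^ 2 = ‖v x - x‖ ^ 2)]

lemma sonj_add_measure [IsFiniteMeasure ρ] [IsFiniteMeasure σ]
    (hid : MemLp (fun x => x) 2 (ρ + σ)) (hu : MemLp u 2 (ρ + σ)) :
    SONJ (ρ + σ) lam u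
      = SONJ ρ lam u + SONJ σ lam u + lam * (fusionPenalty ρ σ u + fusionPenalty σ ρ u) := by
  have hq : Integrable (fun x => ‖u x - x‖ ^ 2) (ρ + σ) := (hu.sub hid).norm.integrable_sq
  have hui := hu.integrable one_le_two
  have hρ := hui.left_of_add_measure
  have hσ := hui.right_of_add_measure
  rw [sonj_eq_fusionPenalty, sonj_eq_fusionPenalty, sonj_eq_fusionPenalty,
    integral_add_measure hq.left_of_add_measure hq.right_of_add_measure,
    fusionPenalty_add_left hρ hσ hui, fusionPenalty_add_right hρ hρ hσ,
    fusionPenalty_add_right hσ hρ hσ]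
  ring

lemma Cohesive.exists_isSONMin_const [IsFiniteMeasure μ] (h : Cohesive μ lam) :
    ∃ c, IsSONMin μ lam (fun _ => c) := by
  obtain ⟨u, hu, c, huc⟩ := h
  exact ⟨c, memLp_const c, fun v hv => (sonj_congr_ae huc).symm.trans_le (hu.2 v hv)⟩

lemma IsSONMin.ae_eq [IsFiniteMeasure μ] (hlam : 0 ≤ lam) (hid : MemLp (fun x => x) 2 μ)
    (hu : IsSONMin μ lam u) (hv : IsSONMin μ lam v) : u =ᵐ[μ] v := by
  have hui := hu.1.integrable one_le_two
  have hvi := hv.1.integrable one_le_two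
  set m : Euc d → Euc d := fun x => (2 : ℝ)⁻¹ • (u x + v x)
  have hm : MemLp m 2 μ := (hu.1.add hv.1).const_smul (2 : ℝ)⁻¹
  have hux : Integrable (fun x => ‖u x - x‖ ^ 2) μ := (hu.1.sub hid).norm.integrable_sq
  have hvx : Integrable (fun x => ‖v x - x‖ ^ 2) μ := (hv.1.sub hid).norm.integrable_sq
  have huv : Integrable (fun x => ‖u x - v x‖ ^ 2) μ := (hu.1.sub hv.1).norm.integrable_sq
  have hpt (x : Euc d) : ‖m x - x‖ ^ 2
      = 2⁻¹ * ‖u x - x‖ ^ 2 + 2⁻¹ * ‖v x - x‖ ^ 2 - 4⁻¹ * ‖u x - v x‖ ^ 2 := by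
    have h := parallelogram_law_with_norm ℝ (u x - x) (v x - x)
    rw [show u x - x - (v x - x) = u x - v x by abel] at h
    rw [show m x - x = (2 : ℝ)⁻¹ • ((u x - x) + (v x - x)) by simp only [m]; module, norm_smul,
      mul_pow, Real.norm_of_nonneg (by norm_num)]
    linarith
  have hfid : ∫ x, ‖m x - x‖ ^ 2 ∂μ = 2⁻¹ * ∫ x, ‖u x - x‖ ^ 2 ∂μ
      + 2⁻¹ * ∫ x, ‖v x - x‖ ^ 2 ∂μ - 4⁻¹ * ∫ x, ‖u x - v x‖ ^ 2 ∂μ := by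
    have hsum : Integrable (fun x => 2⁻¹ * ‖u x - x‖ ^ 2 + 2⁻¹ * ‖v x - x‖ ^ 2) μ :=
      (hux.const_mul _).add (hvx.const_mul _)
    rw [integral_congr_ae (ae_of_all _ hpt), integral_sub hsum (huv.const_mul _),
      integral_add (hux.const_mul _) (hvx.const_mul _), integral_const_mul, integral_const_mul,
      integral_const_mul]
  have hpen : lam * fusionPenalty μ μ m
      ≤ lam * (2⁻¹ * fusionPenalty μ μ u + 2⁻¹ * fusionPenalty μ μ v) :=
    mul_le_mul_of_nonneg_left (fusionPenalty_midpoint_le hui hui hvi hvi) hlam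
  have h₁ := hu.2 m hm
  have h₂ := hu.2 v hv.1
  have h₃ := hv.2 u hu.1
  simp only [sonj_eq_fusionPenalty] at h₁ h₂ h₃
  have hzero : ∫ x, ‖u x - v x‖ ^ 2 ∂μ = 0 :=
    le_antisymm (by nlinarith) (integral_nonneg fun _ => sq_nonneg _)
  filter_upwards [(integral_eq_zero_iff_of_nonneg (fun _ => sq_nonneg _) huv).1 hzero] with x hx
  simpa [sub_eq_zero] using hx

/-- Translating `u` by a constant leaves the fusion term unchanged and shifts the fidelity term by
an amount independent of the constant, so a constant minimizer `c₀` transfers its optimality to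
the constant `⨍ u`. -/
lemma Cohesive.sonj_average_le [IsFiniteMeasure ρ] (hρ : Cohesive ρ lam)
    (hid : MemLp (fun x => x) 2 ρ) (hu : MemLp u 2 ρ) :
    SONJ ρ lam (fun _ => ⨍ x, u x ∂ρ) ≤ SONJ ρ lam u := by
  obtain ⟨c₀, hc₀⟩ := hρ.exists_isSONMin_const
  set ū := ⨍ x, u x ∂ρ
  set g : Euc d → Euc d := fun x => x - (u x - ū)
  have hui := hu.integrable one_le_two
  have hg : MemLp g 2 ρ := hid.sub (hu.sub (memLp_const ū))
  have hgi : ∫ x, g x ∂ρ = ∫ x, x ∂ρ := by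
    have hcentered : Integrable (fun x => u x - ū) ρ := hui.sub (integrable_const ū)
    rw [integral_sub (hid.integrable one_le_two) hcentered,
      integral_sub hui (integrable_const ū), integral_const, measure_smul_average, sub_self,
      sub_zero]
  have hshift (b : Euc d) : ∫ x, ‖b - x‖ ^ 2 ∂ρ - ∫ x, ‖b - g x‖ ^ 2 ∂ρ
      = ∫ x, ‖x‖ ^ 2 ∂ρ - ∫ x, ‖g x‖ ^ 2 ∂ρ := by
    rw [integral_norm_sub_sq hid, integral_norm_sub_sq hg, hgi]
    ring
  have htrans (b : Euc d) : SONJ ρ lam (fun x => u x - ū + b)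
      = ∫ x, ‖b - g x‖ ^ 2 ∂ρ + lam * fusionPenalty ρ ρ u := by
    rw [sonj_eq_fusionPenalty]
    congr 2
    · funext x
      congr 2
      simp only [g]
      abel
    · simp only [fusionPenalty, add_sub_add_right_eq_sub, sub_sub_sub_cancel_right]
  have hmin : SONJ ρ lam (fun _ => c₀) ≤ SONJ ρ lam (fun x => u x - ū + c₀) :=
    hc₀.2 _ ((hu.sub (memLp_const ū)).add (memLp_const c₀))
  have hu_eq : SONJ ρ lam u = ∫ x, ‖ū - g x‖ ^ 2 ∂ρ + lam * fusionPenalty ρ ρ u := by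
    rw [← htrans]
    simp only [sub_add_cancel]
  rw [htrans, sonj_const] at hmin
  rw [sonj_const, hu_eq]
  linarith [hshift c₀, hshift ū]

/-- Cohesion of `ρ` replaces `u` by its `ρ`-average; convexity of `‖· - c‖²` then merges that
average with the value of `u` at the atom. -/
lemma Cohesive.sonj_average_le_add [IsFiniteMeasure ρ] [IsFiniteMeasure δ] (hρ : Cohesive ρ lam)
    (hlam : 0 ≤ lam) {c : Euc d} (hc : ρ.real univ • c = ∫ x, x ∂ρ) (hδ : ∀ᵐ x ∂δ, x = c)
    (hid : MemLp (fun x => x) 2 (ρ + δ)) (hu : MemLp u 2 (ρ + δ)) :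
    SONJ (ρ + δ) lam (fun _ => ⨍ x, u x ∂(ρ + δ)) ≤ SONJ (ρ + δ) lam u := by
  set β := ⨍ x, u x ∂(ρ + δ)
  have hui := hu.integrable one_le_two
  have hidρ := hid.left_of_add_measure
  have hatom (F : Euc d → ℝ) : ∫ x, F x ∂δ = δ.real univ * F c := by
    rw [integral_congr_ae (hδ.mono fun x hx => congrArg F hx), integral_const, smul_eq_mul]
  have hβ : (ρ.real univ + δ.real univ) • β = ρ.real univ • ⨍ x, u x ∂ρ + δ.real univ • u c := by
    rw [← measureReal_add_apply, measure_smul_average, measure_smul_average,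
      integral_add_measure hui.left_of_add_measure hui.right_of_add_measure,
      integral_congr_ae (hδ.mono fun x hx => congrArg u hx), integral_const]
  have hmoment := integral_norm_sub_sq_eq_add hidρ hc
  have hconv := mul_norm_sub_sq_le_of_smul_add_smul measureReal_nonneg measureReal_nonneg hβ c
  have hcoh := hρ.sonj_average_le hidρ hu.left_of_add_measure
  rw [sonj_const, hmoment] at hcoh
  have hJδ : ∫ x, ‖u x - x‖ ^ 2 ∂δ ≤ SONJ δ lam u :=
    le_add_of_nonneg_right (mul_nonneg hlam fusionPenalty_nonneg)
  rw [hatom] at hJδ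
  have hcross := mul_nonneg hlam (add_nonneg (fusionPenalty_nonneg (μ := ρ) (ν := δ) (f := u))
    (fusionPenalty_nonneg (μ := δ) (ν := ρ) (f := u)))
  have hβx : Integrable (fun x => ‖β - x‖ ^ 2) (ρ + δ) :=
    ((memLp_const β).sub hid).norm.integrable_sq
  rw [sonj_add_measure hid hu, sonj_const, integral_add_measure hβx.left_of_add_measure
    hβx.right_of_add_measure, hmoment, hatom]
  nlinarith

lemma sonj_ite_setAverage_le [IsFiniteMeasure μ] (hlam : 0 ≤ lam) {S : Set (Euc d)}
    [DecidablePred (· ∈ S)] (hS : MeasurableSet S) (hid : MemLp (fun x => x) 2 μ) (hu : MemLp u 2 μ)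
    (hS_avg : SONJ (μ.restrict S) lam (fun _ => ⨍ x in S, u x ∂μ) ≤ SONJ (μ.restrict S) lam u) :
    SONJ μ lam (fun x => if x ∈ S then ⨍ y in S, u y ∂μ else u x) ≤ SONJ μ lam u := by
  set b := ⨍ x in S, u x ∂μ
  set v : Euc d → Euc d := fun x => if x ∈ S then b else u x
  set ρ := μ.restrict S
  set σ := μ.restrict Sᶜ
  have hv : MemLp v 2 μ := MemLp.piecewise hS (memLp_const b) (hu.restrict Sᶜ)
  have hvρ : v =ᵐ[ρ] fun _ => b := (ae_restrict_mem hS).mono fun x hx => if_pos hx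
  have hvσ : v =ᵐ[σ] u := (ae_restrict_mem hS.compl).mono fun x hx => if_neg hx
  have hui := hu.integrable one_le_two
  have hvi := hv.integrable one_le_two
  have hcross : fusionPenalty σ ρ v ≤ fusionPenalty σ ρ u := by
    have hvx : ∀ᵐ x ∂σ, ∫ y, ‖v x - v y‖ ∂ρ = ρ.real univ * ‖u x - b‖ := by
      filter_upwards [hvσ] with x hx
      rw [integral_congr_ae (hvρ.mono fun y hy => by rw [hx, hy] : ∀ᵐ y ∂ρ,
        ‖v x - v y‖ = ‖u x - b‖), integral_const, smul_eq_mul]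
    rw [fusionPenalty, integral_congr_ae hvx]
    exact integral_mono ((hui.restrict.sub (integrable_const b)).norm.const_mul _)
      (integrable_integral_norm_sub hui.restrict hui.restrict)
      fun x => mul_norm_sub_average_le hui.restrict (u x)
  have hμ : ρ + σ = μ := Measure.restrict_add_restrict_compl hS
  rw [← hμ] at hid hu hv ⊢
  rw [sonj_add_measure hid hv, sonj_add_measure hid hu, sonj_congr_ae hvρ, sonj_congr_ae hvσ,
    fusionPenalty_comm hvi.restrict hvi.restrict, fusionPenalty_comm hui.restrict hui.restrict]
  nlinarith [mul_le_mul_of_nonneg_left hcross hlam]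

end SON

section Consolidation

/-- The map `u` of the informal statement, with `c = C_μ(A)`. -/
def consolidate {E : Type*} (A : Set E) (c x : E) : E := if x ∈ A then c else x

variable {d : ℕ} {μ : Measure (Euc d)} [IsFiniteMeasure μ] {lam : ℝ} {A : Set (Euc d)}
  {c : Euc d}

lemma measurable_consolidate (hA : MeasurableSet A) : Measurable (consolidate A c) :=
  Measurable.ite hA measurable_const measurable_id

lemma sonj_comp_consolidate (hA : MeasurableSet A) (hid : MemLp (fun x => x) 2 μ)
    (hc : μ.real A • c = ∫ x in A, x ∂μ) {w : Euc d → Euc d}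
    (hw : MemLp w 2 (μ.map (consolidate A c))) :
    SONJ μ lam (w ∘ consolidate A c)
      = SONJ (μ.map (consolidate A c)) lam w + ∫ x in A, ‖c - x‖ ^ 2 ∂μ := by
  set T := consolidate A c
  have hT : Measurable T := measurable_consolidate hA
  have hwT : MemLp (w ∘ T) 2 μ := (memLp_map_measure_iff hw.1 hT.aemeasurable).1 hw
  have hTμ : MemLp T 2 μ := MemLp.piecewise hA (memLp_const c) (hid.restrict Aᶜ)
  have hwi := hw.integrable one_le_two
  have hfid_map : ∫ y, ‖w y - y‖ ^ 2 ∂(μ.map T) = ∫ x, ‖w (T x) - T x‖ ^ 2 ∂μ :=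
    integral_map hT.aemeasurable ((hw.1.sub aestronglyMeasurable_id).norm.pow 2)
  have hA_moment : ∫ x in A, ‖w (T x) - x‖ ^ 2 ∂μ
      = ∫ x in A, ‖w (T x) - T x‖ ^ 2 ∂μ + ∫ x in A, ‖c - x‖ ^ 2 ∂μ := by
    have hTA : ∀ x ∈ A, T x = c := fun x hx => if_pos hx
    have h₁ : ∫ x in A, ‖w (T x) - x‖ ^ 2 ∂μ = ∫ x in A, ‖w c - x‖ ^ 2 ∂μ :=
      setIntegral_congr_fun hA fun x hx => by simp only [hTA x hx]
    have h₂ : ∫ x in A, ‖w (T x) - T x‖ ^ 2 ∂μ = ∫ x in A, ‖w c - c‖ ^ 2 ∂μ :=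
      setIntegral_congr_fun hA fun x hx => by simp only [hTA x hx]
    rw [h₁, h₂, setIntegral_const,
      integral_norm_sub_sq_eq_add (hid.restrict A) (by rwa [measureReal_restrict_apply_univ]),
      measureReal_restrict_apply_univ, smul_eq_mul]
  have hAc : ∫ x in Aᶜ, ‖w (T x) - x‖ ^ 2 ∂μ = ∫ x in Aᶜ, ‖w (T x) - T x‖ ^ 2 ∂μ :=
    setIntegral_congr_fun hA.compl fun x hx => by simp only [T, consolidate, if_neg hx]
  have hq₁ : Integrable (fun x => ‖w (T x) - x‖ ^ 2) μ := (hwT.sub hid).norm.integrable_sq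
  have hq₂ : Integrable (fun x => ‖w (T x) - T x‖ ^ 2) μ := (hwT.sub hTμ).norm.integrable_sq
  rw [sonj_eq_fusionPenalty, sonj_eq_fusionPenalty, fusionPenalty_map hT hwi hwi, hfid_map]
  simp only [Function.comp_apply]
  rw [← integral_add_compl hA hq₁, ← integral_add_compl hA hq₂, hA_moment, hAc]
  ring

lemma exists_sonj_comp_consolidate_le (hlam : 0 ≤ lam) (hA : MeasurableSet A)
    (hid : MemLp (fun x => x) 2 μ) (hc : μ.real A • c = ∫ x in A, x ∂μ)
    (hcoh : Cohesive (μ.restrict A) lam) {u : Euc d → Euc d} (hu : MemLp u 2 μ) :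
    ∃ w, MemLp w 2 (μ.map (consolidate A c)) ∧ SONJ μ lam (w ∘ consolidate A c) ≤ SONJ μ lam u := by
  -- a strongly measurable representative, so that `w` below is measurable for the pushforward too
  set ũ := hu.1.mk u
  have hũ : MemLp ũ 2 μ := hu.ae_eq hu.1.ae_eq_mk
  set S := A ∪ {c}
  have hS : MeasurableSet S := hA.union (measurableSet_singleton c)
  set β := ⨍ x in S, ũ x ∂μ
  set w : Euc d → Euc d := fun y => if y = c then β else ũ y
  have hw_meas : StronglyMeasurable w :=
    StronglyMeasurable.ite (measurableSet_singleton c) stronglyMeasurable_const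
      hu.1.stronglyMeasurable_mk
  have hwT : w ∘ consolidate A c = fun x => if x ∈ S then β else ũ x := by
    funext x
    by_cases hx : x ∈ A <;> simp [w, S, consolidate, hx]
  have hδ : MeasurableSet ({c} \ A) := (measurableSet_singleton c).diff hA
  have hμS : μ.restrict S = μ.restrict A + μ.restrict ({c} \ A) := by
    rw [← Measure.restrict_union disjoint_sdiff_right hδ, Set.union_sdiff_self]
  have hS_avg : SONJ (μ.restrict S) lam (fun _ => β) ≤ SONJ (μ.restrict S) lam ũ := by
    simp only [β, hμS]
    exact hcoh.sonj_average_le_add hlam (by rwa [measureReal_restrict_apply_univ])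
      ((ae_restrict_mem hδ).mono fun x hx => hx.1) (hμS ▸ hid.restrict S) (hμS ▸ hũ.restrict S)
  refine ⟨w, ?_, ?_⟩
  · rw [memLp_map_measure_iff hw_meas.aestronglyMeasurable (measurable_consolidate hA).aemeasurable,
      hwT]
    exact MemLp.piecewise hS (memLp_const β) (hũ.restrict Sᶜ)
  · rw [hwT, sonj_congr_ae hu.1.ae_eq_mk]
    exact sonj_ite_setAverage_le hlam hS hid hũ hS_avg

end Consolidation

theorem stmt12_general
    (d : ℕ) (μ : Measure (Euc d)) [IsFiniteMeasure μ]
    (hsupp : ∃ K : Set (Euc d), IsCompact K ∧ μ Kᶜ = 0)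
    (lam : ℝ) (hlam : 0 ≤ lam)
    (A : Set (Euc d)) (hA : MeasurableSet A) (hApos : 0 < μ A)
    (hcoh : Cohesive (μ.restrict A) lam)
    (umin vmin : Euc d → Euc d)
    (humin : IsSONMin μ lam umin)
    (hvmin : IsSONMin
      (Measure.map (fun x => if x ∈ A then muCentroid μ A else x) μ) lam vmin) :
    ∀ᵐ x ∂μ, umin x = vmin (if x ∈ A then muCentroid μ A else x) := by
  set T := consolidate A (muCentroid μ A)
  have hid : MemLp (fun x => x) 2 μ := memLp_id_of_isCompact 2 hsupp
  have hc : μ.real A • muCentroid μ A = ∫ x in A, x ∂μ := by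
    rw [muCentroid, if_pos hApos, smul_smul, measureReal_def,
      mul_inv_cancel₀ (ENNReal.toReal_pos hApos.ne' (measure_ne_top μ A)).ne', one_smul]
  have hv : IsSONMin (μ.map T) lam vmin := hvmin
  obtain ⟨w, hw, hwu⟩ := exists_sonj_comp_consolidate_le hlam hA hid hc hcoh humin.1
  have hvT : IsSONMin μ lam (vmin ∘ T) := by
    refine ⟨(memLp_map_measure_iff hv.1.1 (measurable_consolidate hA).aemeasurable).1 hv.1,
      fun v hv' => ?_⟩
    calc SONJ μ lam (vmin ∘ T) = SONJ (μ.map T) lam vmin + ∫ x in A, ‖muCentroid μ A - x‖ ^ 2 ∂μ :=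
          sonj_comp_consolidate hA hid hc hv.1
      _ ≤ SONJ (μ.map T) lam w + ∫ x in A, ‖muCentroid μ A - x‖ ^ 2 ∂μ := by
          gcongr
          exact hv.2 w hw
      _ = SONJ μ lam (w ∘ T) := (sonj_comp_consolidate hA hid hc hw).symm
      _ ≤ SONJ μ lam umin := hwu
      _ ≤ SONJ μ lam v := humin.2 v hv'
  exact humin.ae_eq hlam hid hvT

/-- **Proposition (consolidating a cohesive set).**  If `μ|_A` is `λ`-cohesive with
`μ(A) > 0`, and `u` consolidates `A` at its centroid `C_μ(A)` while fixing `Aᶜ`, then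
for `μ`-a.e. `x`, `u_{μ,λ}(x) = u_{M_u(μ),λ}(u(x))`, where `M_u(μ)` is the pushforward
of `μ` under `u`. -/
theorem stmt12
    (d : ℕ) (μ : Measure (Euc d)) [IsFiniteMeasure μ] (hμ0 : μ ≠ 0)
    (hsupp : ∃ K : Set (Euc d), IsCompact K ∧ μ Kᶜ = 0)
    (lam : ℝ) (hlam : 0 ≤ lam)
    (A : Set (Euc d)) (hA : MeasurableSet A) (hApos : 0 < μ A)
    (hcoh : Cohesive (μ.restrict A) lam)
    (umin vmin : Euc d → Euc d)
    (humin : IsSONMin μ lam umin)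
    (hvmin : IsSONMin
      (Measure.map (fun x => if x ∈ A then muCentroid μ A else x) μ) lam vmin) :
    ∀ᵐ x ∂μ, umin x = vmin (if x ∈ A then muCentroid μ A else x) :=
  stmt12_general d μ hsupp lam hlam A hA hApos hcoh umin vmin humin hvmin
end
end

section
/- (Two points) Let x₀, x₁ ∈ ℝ^d with x₀ ≠ x₁, let a₀, a₁ > 0, and let μ = a₀·δ_{x₀} + a₁·δ_{x₁}. Then λ₁(μ) = λ_*(μ) = |x₁ − x₀|/(a₀ + a₁). -/
open MeasureTheory Filter Topology ProbabilityTheory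
open scoped ENNReal NNReal symmDiff Classical RealInnerProductSpace

noncomputable section

/-! With `D = |x₁ - x₀|` and `A = a₀ + a₁`, the functional only sees `p = u x₀` and `q = u x₁`:
`J = a₀|p - x₀|² + a₁|q - x₁|² + 2λa₀a₁|p - q|`. The triangle inequality
`D ≤ |p - x₀| + |p - q| + |q - x₁|` and completing the square in `|p - x₀|` and `|q - x₁|` give
`J ≥ a₀a₁λ(2D - λA)`. For `λA ≤ D` this bound is attained by the points of the segment at
distances `λa₁` from `x₀` and `λa₀` from `x₁`, which are distinct iff `λA < D`. At `λ = D/A` the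
bound is `a₀a₁D²/A`, the energy of the weighted centroid; above `D/A` every split pair pays an
extra `2(λ - D/A)a₀a₁|p - q| > 0`, while below `D/A` the split pair beats every constant. -/

namespace MeasureTheory

variable {α : Type*} [MeasurableSpace α] [MeasurableSingletonClass α] {x₀ x₁ : α} {a₀ a₁ : ℝ}

theorem ae_ofReal_smul_dirac_add_iff (h₀ : 0 < a₀) (h₁ : 0 < a₁) {P : α → Prop} :
    (∀ᵐ z ∂(ENNReal.ofReal a₀ • Measure.dirac x₀ + ENNReal.ofReal a₁ • Measure.dirac x₁), P z) ↔
      P x₀ ∧ P x₁ := by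
  simp [h₀, h₁, ae_dirac_eq]

theorem memLp_ofReal_smul_dirac_add {E : Type*} [NormedAddCommGroup E] (f : α → E)
    (p : ℝ≥0∞) :
    MemLp f p (ENNReal.ofReal a₀ • Measure.dirac x₀ + ENNReal.ofReal a₁ • Measure.dirac x₁) := by
  have : IsFiniteMeasure
      (ENNReal.ofReal a₀ • Measure.dirac x₀ + ENNReal.ofReal a₁ • Measure.dirac x₁) :=
    ⟨by simp⟩
  refine MemLp.of_bound (aestronglyMeasurable_dirac.smul_measure _ |>.add_measure
      (aestronglyMeasurable_dirac.smul_measure _)) (max ‖f x₀‖ ‖f x₁‖) ?_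
  rw [ae_add_measure_iff]
  exact ⟨Measure.ae_smul_measure (by simp [ae_dirac_eq]) _,
    Measure.ae_smul_measure (by simp [ae_dirac_eq]) _⟩

theorem integral_ofReal_smul_dirac_add {E : Type*} [NormedAddCommGroup E] [NormedSpace ℝ E]
    [CompleteSpace E] (h₀ : 0 ≤ a₀) (h₁ : 0 ≤ a₁) (f : α → E) :
    ∫ x, f x ∂(ENNReal.ofReal a₀ • Measure.dirac x₀ + ENNReal.ofReal a₁ • Measure.dirac x₁) =
      a₀ • f x₀ + a₁ • f x₁ := by
  rw [integral_add_measure, integral_smul_measure, integral_smul_measure, integral_dirac,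
    integral_dirac, ENNReal.toReal_ofReal h₀, ENNReal.toReal_ofReal h₁]
  all_goals exact (integrable_dirac (by simp)).smul_measure ENNReal.ofReal_ne_top

end MeasureTheory

section TwoPointEnergy

variable {X : Type*} [PseudoMetricSpace X] {x₀ x₁ : X} {a₀ a₁ lam : ℝ}

def twoPointEnergy (x₀ x₁ : X) (a₀ a₁ lam : ℝ) (p q : X) : ℝ :=
  a₀ * dist p x₀ ^ 2 + a₁ * dist q x₁ ^ 2 + 2 * lam * a₀ * a₁ * dist p q

theorem le_twoPointEnergy (hlam : 0 ≤ lam) (h₀ : 0 ≤ a₀) (h₁ : 0 ≤ a₁) (p q : X) :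
    a₀ * a₁ * lam * (2 * dist x₀ x₁ - lam * (a₀ + a₁)) ≤ twoPointEnergy x₀ x₁ a₀ a₁ lam p q := by
  have htri : dist x₀ x₁ ≤ dist p x₀ + dist p q + dist q x₁ := by
    simpa only [dist_comm x₀ p] using dist_triangle4 x₀ p q x₁
  unfold twoPointEnergy
  nlinarith [mul_nonneg h₀ (sq_nonneg (dist p x₀ - lam * a₁)),
    mul_nonneg h₁ (sq_nonneg (dist q x₁ - lam * a₀)),
    mul_nonneg (mul_nonneg (mul_nonneg hlam h₀) h₁) (sub_nonneg.2 htri)]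

theorem centroidEnergy_add_le_twoPointEnergy (h₀ : 0 < a₀) (h₁ : 0 < a₁) (p q : X) :
    a₀ * a₁ * dist x₀ x₁ ^ 2 / (a₀ + a₁)
        + 2 * (lam - dist x₀ x₁ / (a₀ + a₁)) * a₀ * a₁ * dist p q ≤
      twoPointEnergy x₀ x₁ a₀ a₁ lam p q := by
  have hA : 0 < a₀ + a₁ := by positivity
  have h := le_twoPointEnergy (x₀ := x₀) (x₁ := x₁) (by positivity : 0 ≤ dist x₀ x₁ / (a₀ + a₁))
    h₀.le h₁.le p q
  have hval : a₀ * a₁ * (dist x₀ x₁ / (a₀ + a₁)) *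
      (2 * dist x₀ x₁ - dist x₀ x₁ / (a₀ + a₁) * (a₀ + a₁)) =
      a₀ * a₁ * dist x₀ x₁ ^ 2 / (a₀ + a₁) := by
    field_simp
    ring
  unfold twoPointEnergy at *
  linarith

end TwoPointEnergy

open AffineMap

section TwoPointMinimizers

variable {E : Type*} [NormedAddCommGroup E] [NormedSpace ℝ E] {x₀ x₁ : E} {a₀ a₁ lam : ℝ}

theorem twoPointEnergy_centroid (h₀ : 0 < a₀) (h₁ : 0 < a₁) :
    twoPointEnergy x₀ x₁ a₀ a₁ lam (lineMap x₀ x₁ (a₁ / (a₀ + a₁)))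
        (lineMap x₀ x₁ (a₁ / (a₀ + a₁))) =
      a₀ * a₁ * dist x₀ x₁ ^ 2 / (a₀ + a₁) := by
  have hA : 0 < a₀ + a₁ := by positivity
  have h1 : 1 - a₁ / (a₀ + a₁) = a₀ / (a₀ + a₁) := by field_simp; ring
  rw [twoPointEnergy, dist_lineMap_left, dist_lineMap_right, h1, dist_self, Real.norm_of_nonneg
    (by positivity), Real.norm_of_nonneg (by positivity)]
  field_simp
  ring

theorem twoPointEnergy_lineMap (hx : x₀ ≠ x₁) (h₀ : 0 ≤ a₀) (h₁ : 0 ≤ a₁) (hlam : 0 ≤ lam)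
    (hle : lam * (a₀ + a₁) ≤ dist x₀ x₁) :
    twoPointEnergy x₀ x₁ a₀ a₁ lam (lineMap x₀ x₁ (lam * a₁ / dist x₀ x₁))
        (lineMap x₀ x₁ (1 - lam * a₀ / dist x₀ x₁)) =
      a₀ * a₁ * lam * (2 * dist x₀ x₁ - lam * (a₀ + a₁)) := by
  have hD : 0 < dist x₀ x₁ := dist_pos.2 hx
  have hgap : dist (lam * a₁ / dist x₀ x₁) (1 - lam * a₀ / dist x₀ x₁) =
      1 - lam * (a₀ + a₁) / dist x₀ x₁ := by
    have hθ : lam * (a₀ + a₁) / dist x₀ x₁ ≤ 1 := (div_le_one hD).2 hle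
    have hsub : lam * a₁ / dist x₀ x₁ - (1 - lam * a₀ / dist x₀ x₁) =
        lam * (a₀ + a₁) / dist x₀ x₁ - 1 := by ring
    rw [Real.dist_eq, hsub, abs_of_nonpos (by linarith)]
    ring
  rw [twoPointEnergy, dist_lineMap_left, dist_lineMap_right, dist_lineMap_lineMap, hgap,
    sub_sub_cancel, Real.norm_of_nonneg (by positivity), Real.norm_of_nonneg (by positivity)]
  field_simp
  ring

end TwoPointMinimizers

section TwoPointSON

variable {d : ℕ} {x₀ x₁ : Euc d} {a₀ a₁ lam : ℝ}

theorem SONJ_ofReal_smul_dirac_add (h₀ : 0 ≤ a₀) (h₁ : 0 ≤ a₁) (u : Euc d → Euc d) :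
    SONJ (ENNReal.ofReal a₀ • Measure.dirac x₀ + ENNReal.ofReal a₁ • Measure.dirac x₁) lam u =
      twoPointEnergy x₀ x₁ a₀ a₁ lam (u x₀) (u x₁) := by
  simp only [SONJ, twoPointEnergy, integral_ofReal_smul_dirac_add h₀ h₁, smul_eq_mul,
    ← dist_eq_norm, dist_self, dist_comm (u x₁)]
  ring

theorem isSONMin_ofReal_smul_dirac_add_iff (hx : x₀ ≠ x₁) (h₀ : 0 ≤ a₀) (h₁ : 0 ≤ a₁)
    (u : Euc d → Euc d) :
    IsSONMin (ENNReal.ofReal a₀ • Measure.dirac x₀ + ENNReal.ofReal a₁ • Measure.dirac x₁) lam u ↔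
      ∀ p q, twoPointEnergy x₀ x₁ a₀ a₁ lam (u x₀) (u x₁) ≤ twoPointEnergy x₀ x₁ a₀ a₁ lam p q := by
  simp only [IsSONMin, SONJ_ofReal_smul_dirac_add h₀ h₁, memLp_ofReal_smul_dirac_add, true_and,
    forall_const]
  refine ⟨fun h p q => ?_, fun h v => h (v x₀) (v x₁)⟩
  simpa [Function.update_of_ne hx.symm] using h (Function.update (fun _ => q) x₀ p)

theorem cohesive_ofReal_smul_dirac_add_iff (hx : x₀ ≠ x₁) (h₀ : 0 < a₀) (h₁ : 0 < a₁)
    (hlam : 0 ≤ lam) :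
    Cohesive (ENNReal.ofReal a₀ • Measure.dirac x₀ + ENNReal.ofReal a₁ • Measure.dirac x₁) lam ↔
      dist x₀ x₁ / (a₀ + a₁) ≤ lam := by
  have hA : 0 < a₀ + a₁ := by positivity
  constructor
  · rintro ⟨u, hu, c, hc⟩
    obtain ⟨hc₀, hc₁⟩ := (ae_ofReal_smul_dirac_add_iff h₀ h₁).1 hc
    by_contra! hlt
    have hlt' : lam * (a₀ + a₁) < dist x₀ x₁ := (lt_div_iff₀ hA).1 hlt
    have hmin := (isSONMin_ofReal_smul_dirac_add_iff hx h₀.le h₁.le u).1 hu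
      (lineMap x₀ x₁ (lam * a₁ / dist x₀ x₁)) (lineMap x₀ x₁ (1 - lam * a₀ / dist x₀ x₁))
    rw [twoPointEnergy_lineMap hx h₀.le h₁.le hlam hlt'.le, hc₀, hc₁] at hmin
    have hcc :=
      centroidEnergy_add_le_twoPointEnergy (x₀ := x₀) (x₁ := x₁) (lam := lam) h₀ h₁ c c
    rw [dist_self, mul_zero, add_zero, div_le_iff₀ hA] at hcc
    nlinarith [mul_pos (mul_pos h₀ h₁) (sq_pos_of_pos (sub_pos.2 hlt'))]
  · intro hle
    refine ⟨fun _ => lineMap x₀ x₁ (a₁ / (a₀ + a₁)),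
      (isSONMin_ofReal_smul_dirac_add_iff hx h₀.le h₁.le _).2 fun p q => ?_, _, .rfl⟩
    rw [twoPointEnergy_centroid h₀ h₁]
    refine le_trans ?_ (centroidEnergy_add_le_twoPointEnergy h₀ h₁ p q)
    have := sub_nonneg.2 hle
    exact le_add_of_nonneg_right (by positivity)

theorem shattered_ofReal_smul_dirac_add (hx : x₀ ≠ x₁) (h₀ : 0 < a₀) (h₁ : 0 < a₁)
    (hlam : 0 ≤ lam) (hlt : lam < dist x₀ x₁ / (a₀ + a₁)) :
    Shattered (ENNReal.ofReal a₀ • Measure.dirac x₀ + ENNReal.ofReal a₁ • Measure.dirac x₁)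
      lam := by
  have hD : 0 < dist x₀ x₁ := dist_pos.2 hx
  have hlt' : lam * (a₀ + a₁) < dist x₀ x₁ := (lt_div_iff₀ (by positivity)).1 hlt
  set c := 1 - lam * (a₀ + a₁) / dist x₀ x₁
  have hc : c ≠ 0 := sub_ne_zero.2 ((div_lt_one hD).2 hlt').ne'
  set v : Euc d → Euc d := fun z => lineMap x₀ x₁ (lam * a₁ / dist x₀ x₁) + c • (z - x₀)
  have hv₁ : v x₁ = lineMap x₀ x₁ (1 - lam * a₀ / dist x₀ x₁) := by
    simp only [v, c, lineMap_apply_module]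
    module
  refine ⟨v, (isSONMin_ofReal_smul_dirac_add_iff hx h₀.le h₁.le v).2 fun p q => ?_, v,
    by fun_prop, fun z w h => ?_, .rfl⟩
  · rw [hv₁, show v x₀ = lineMap x₀ x₁ (lam * a₁ / dist x₀ x₁) by simp [v],
      twoPointEnergy_lineMap hx h₀.le h₁.le hlam hlt'.le]
    exact le_twoPointEnergy hlam h₀.le h₁.le p q
  · exact sub_left_injective (smul_right_injective _ hc (add_left_cancel h))

theorem le_of_shattered_ofReal_smul_dirac_add (hx : x₀ ≠ x₁) (h₀ : 0 < a₀) (h₁ : 0 < a₁)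
    (h : Shattered (ENNReal.ofReal a₀ • Measure.dirac x₀ + ENNReal.ofReal a₁ • Measure.dirac x₁)
      lam) :
    lam ≤ dist x₀ x₁ / (a₀ + a₁) := by
  obtain ⟨u, hu, v, -, hv, huv⟩ := h
  obtain ⟨hu₀, hu₁⟩ := (ae_ofReal_smul_dirac_add_iff h₀ h₁).1 huv
  have hsep : 0 < dist (u x₀) (u x₁) := dist_pos.2 (by rw [hu₀, hu₁]; exact hv.ne hx)
  by_contra! hlt
  have hmin := (isSONMin_ofReal_smul_dirac_add_iff hx h₀.le h₁.le u).1 hu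
    (lineMap x₀ x₁ (a₁ / (a₀ + a₁))) (lineMap x₀ x₁ (a₁ / (a₀ + a₁)))
  rw [twoPointEnergy_centroid h₀ h₁] at hmin
  nlinarith [centroidEnergy_add_le_twoPointEnergy (x₀ := x₀) (x₁ := x₁) (lam := lam) h₀ h₁
      (u x₀) (u x₁),
    mul_pos (mul_pos (mul_pos (sub_pos.2 hlt) h₀) h₁) hsep]

theorem setOf_cohesive_ofReal_smul_dirac_add (hx : x₀ ≠ x₁) (h₀ : 0 < a₀) (h₁ : 0 < a₁) :
    {lam | 0 ≤ lam ∧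
      Cohesive (ENNReal.ofReal a₀ • Measure.dirac x₀ + ENNReal.ofReal a₁ • Measure.dirac x₁) lam} =
      Set.Ici (dist x₀ x₁ / (a₀ + a₁)) := by
  ext lam
  refine ⟨fun h => (cohesive_ofReal_smul_dirac_add_iff hx h₀ h₁ h.1).1 h.2, fun h => ?_⟩
  have hlam : 0 ≤ lam := (by positivity : 0 ≤ dist x₀ x₁ / (a₀ + a₁)).trans h
  exact ⟨hlam, (cohesive_ofReal_smul_dirac_add_iff hx h₀ h₁ hlam).2 h⟩

theorem isLUB_setOf_shattered_ofReal_smul_dirac_add (hx : x₀ ≠ x₁) (h₀ : 0 < a₀) (h₁ : 0 < a₁) :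
    IsLUB {lam | 0 ≤ lam ∧
      Shattered (ENNReal.ofReal a₀ • Measure.dirac x₀ + ENNReal.ofReal a₁ • Measure.dirac x₁) lam}
      (dist x₀ x₁ / (a₀ + a₁)) :=
  ⟨fun _ h => le_of_shattered_ofReal_smul_dirac_add hx h₀ h₁ h.2,
    fun _ hb => (isLUB_Ico (div_pos (dist_pos.2 hx) (add_pos h₀ h₁))).2 fun _ h =>
      hb ⟨h.1, shattered_ofReal_smul_dirac_add hx h₀ h₁ h.1 h.2⟩⟩

end TwoPointSON

/-- **Proposition (two points).**  For `μ = a₀ δ_{x₀} + a₁ δ_{x₁}` with `x₀ ≠ x₁` and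
`a₀, a₁ > 0`, one has `λ₁(μ) = λ⋆(μ) = |x₁ - x₀| / (a₀ + a₁)`. -/
theorem stmt13
    (d : ℕ) (x₀ x₁ : Euc d) (hne : x₀ ≠ x₁) (a₀ a₁ : ℝ) (h₀ : 0 < a₀) (h₁ : 0 < a₁)
    (μ : Measure (Euc d))
    (hμ : μ = ENNReal.ofReal a₀ • Measure.dirac x₀ + ENNReal.ofReal a₁ • Measure.dirac x₁) :
    lambda1 μ = ‖x₁ - x₀‖ / (a₀ + a₁) ∧ lambdaStar μ = ‖x₁ - x₀‖ / (a₀ + a₁) := by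
  subst hμ
  rw [norm_sub_rev, ← dist_eq_norm]
  have hτ : 0 < dist x₀ x₁ / (a₀ + a₁) := div_pos (dist_pos.2 hne) (add_pos h₀ h₁)
  refine ⟨?_, ?_⟩
  · rw [lambda1, setOf_cohesive_ofReal_smul_dirac_add hne h₀ h₁, csInf_Ici]
  · exact (isLUB_setOf_shattered_ofReal_smul_dirac_add hne h₀ h₁).csSup_eq
      ⟨0, le_rfl, shattered_ofReal_smul_dirac_add hne h₀ h₁ le_rfl hτ⟩
end
end

section
/- (Interval) Let d = 1 and let μ be Lebesgue measure restricted to the interval [−1/2, 1/2] (a probability measure). Then λ₁(μ) = 1/2. -/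
open MeasureTheory Filter Topology ProbabilityTheory
open scoped ENNReal NNReal symmDiff Classical RealInnerProductSpace

noncomputable section

/-! The kernel `σ(x, y) = (x - y) / |x - y|` is odd, so swapping variables gives
`2 ∬ ⟪σ(x, y), v x⟫ = ∬ ⟪σ(x, y), v x - v y⟫ ≤ ∬ |v x - v y|`. For the uniform measure on
`[-1/2, 1/2]` one has `∫ σ(x, y) dy = 2 x`, so `4 ∫ x v(x) ≤ ∬ |v x - v y|`, and expanding
`J(v) - J(0)` shows that `0` is a minimizer once `λ ≥ 1/2`. The same identity gives
`∫ x = 0` and `∬ |x - y| = 4 ∫ x² = 1/3`; hence for `λ < 1/2` the competitor `(1 - 2λ) x` has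
energy `λ (1 - λ) / 3 < 1/12`, while every constant has energy at least the variance `1/12`. -/

section UnitSub

variable {E : Type*} [NormedAddCommGroup E] [InnerProductSpace ℝ E]

/-- Since `‖0‖⁻¹ = 0`, `unitSub x x = 0`. -/
def unitSub (x y : E) : E := ‖x - y‖⁻¹ • (x - y)

lemma unitSub_swap (x y : E) : unitSub y x = -unitSub x y := by
  rw [unitSub, unitSub, norm_sub_rev, ← smul_neg, neg_sub]

lemma norm_unitSub_le (x y : E) : ‖unitSub x y‖ ≤ 1 := by
  rw [unitSub, norm_smul, norm_inv, norm_norm]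
  exact inv_mul_le_one_of_le₀ le_rfl (norm_nonneg _)

lemma inner_unitSub_sub (x y : E) : ⟪unitSub x y, x - y⟫ = ‖x - y‖ := by
  rw [unitSub, real_inner_smul_left, real_inner_self_eq_norm_sq]
  rcases eq_or_ne ‖x - y‖ 0 with h | h
  · simp [h]
  · field_simp

lemma norm_inner_unitSub_le (x y w : E) : ‖⟪unitSub x y, w⟫‖ ≤ ‖w‖ :=
  (norm_inner_le_norm _ _).trans (mul_le_of_le_one_left (norm_nonneg _) (norm_unitSub_le _ _))

variable [MeasurableSpace E] [BorelSpace E] [SecondCountableTopology E]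

lemma measurable_unitSub : Measurable fun p : E × E => unitSub p.1 p.2 := by
  unfold unitSub; fun_prop

lemma integrable_inner_unitSub {ρ : Measure (E × E)} {g : E × E → E} (hg : Integrable g ρ) :
    Integrable (fun p => ⟪unitSub p.1 p.2, g p⟫) ρ :=
  hg.norm.mono' (measurable_unitSub.aestronglyMeasurable.inner hg.1)
    (.of_forall fun _ => norm_inner_unitSub_le _ _ _)

variable {μ : Measure E} [IsFiniteMeasure μ] {v : E → E}

lemma two_mul_integral_integral_inner_unitSub (hv : Integrable v μ) :
    2 * ∫ x, ∫ y, ⟪unitSub x y, v x⟫ ∂μ ∂μ = ∫ x, ∫ y, ⟪unitSub x y, v x - v y⟫ ∂μ ∂μ := by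
  set F : E × E → ℝ := fun p => ⟪unitSub p.1 p.2, v p.1⟫
  have hF : Integrable F (μ.prod μ) := integrable_inner_unitSub (hv.comp_fst μ)
  have hF' : Integrable (fun p => F p.swap) (μ.prod μ) := hF.swap
  have hodd : (fun p : E × E => ⟪unitSub p.1 p.2, v p.1 - v p.2⟫) = fun p => F p + F p.swap := by
    ext p
    simp only [F, Prod.fst_swap, Prod.snd_swap, unitSub_swap p.1 p.2, inner_neg_left,
      inner_sub_right]
    ring
  have hG := integrable_inner_unitSub ((hv.comp_fst μ).sub (hv.comp_snd μ))
  rw [integral_integral hF, integral_integral hG, hodd,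
    integral_add hF hF', integral_prod_swap F, two_mul]

lemma two_mul_integral_integral_inner_unitSub_le (hv : Integrable v μ) :
    2 * ∫ x, ∫ y, ⟪unitSub x y, v x⟫ ∂μ ∂μ ≤ ∫ x, ∫ y, ‖v x - v y‖ ∂μ ∂μ := by
  have hdiff : Integrable (fun p : E × E => v p.1 - v p.2) (μ.prod μ) :=
    (hv.comp_fst μ).sub (hv.comp_snd μ)
  have hG := integrable_inner_unitSub hdiff
  rw [two_mul_integral_integral_inner_unitSub hv, integral_integral hG,
    integral_integral hdiff.norm]
  exact integral_mono hG hdiff.norm fun p =>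
    (Real.le_norm_self _).trans (norm_inner_unitSub_le _ _ _)

end UnitSub

section SumOfNorms

lemma MeasureTheory.MemLp.integrable_inner {α E : Type*} [MeasurableSpace α] {μ : Measure α}
    [NormedAddCommGroup E] [InnerProductSpace ℝ E] {f g : α → E}
    (hf : MemLp f 2 μ) (hg : MemLp g 2 μ) : Integrable (fun x => ⟪f x, g x⟫) μ :=
  (hf.norm.integrable_mul hg.norm).mono' (hf.1.inner hg.1)
    (.of_forall fun x => norm_inner_le_norm (f x) (g x))

variable {d : ℕ} {μ : Measure (Euc d)} {lam : ℝ}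

lemma SONJ_congr_ae {u w : Euc d → Euc d} (h : u =ᵐ[μ] w) : SONJ μ lam u = SONJ μ lam w := by
  have hx : ∀ᵐ x ∂μ, ‖u x - x‖ ^ 2 = ‖w x - x‖ ^ 2 := h.mono fun x hx => by rw [hx]
  have hxy : ∀ᵐ x ∂μ, ∫ y, ‖u x - u y‖ ∂μ = ∫ y, ‖w x - w y‖ ∂μ :=
    h.mono fun x hx => integral_congr_ae (h.mono fun y hy => by simp only [hx, hy])
  rw [SONJ, SONJ, integral_congr_ae hx, integral_congr_ae hxy]

lemma not_cohesive_of_forall_lt {v : Euc d → Euc d} (hv : MemLp v 2 μ)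
    (h : ∀ c, SONJ μ lam v < SONJ μ lam (fun _ => c)) : ¬Cohesive μ lam := by
  rintro ⟨u, ⟨-, hmin⟩, c, hc⟩
  exact (hmin v hv).not_gt (SONJ_congr_ae hc ▸ h c)

lemma SONJ_eq_of_memLp (hid : MemLp (fun x => x) 2 μ) {v : Euc d → Euc d}
    (hv : MemLp v 2 μ) :
    SONJ μ lam v = ∫ x, ‖v x‖ ^ 2 ∂μ - 2 * ∫ x, ⟪x, v x⟫ ∂μ + ∫ x, ‖x‖ ^ 2 ∂μ
      + lam * ∫ x, ∫ y, ‖v x - v y‖ ∂μ ∂μ := by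
  have hv2 := (memLp_two_iff_integrable_sq_norm hv.1).1 hv
  have hid2 := (memLp_two_iff_integrable_sq_norm hid.1).1 hid
  have hinner : Integrable (fun x => ⟪x, v x⟫) μ := hid.integrable_inner hv
  have hexp : (fun x => ‖v x - x‖ ^ 2) = fun x => ‖v x‖ ^ 2 - 2 * ⟪x, v x⟫ + ‖x‖ ^ 2 := by
    ext x
    rw [norm_sub_sq_real, real_inner_comm]
  rw [SONJ, hexp,
    integral_add (f := fun x => ‖v x‖ ^ 2 - 2 * ⟪x, v x⟫) (hv2.sub (hinner.const_mul 2)) hid2,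
    integral_sub hv2 (hinner.const_mul 2), integral_const_mul]

lemma cohesive_of_two_mul_integral_inner_le (hid : MemLp (fun x => x) 2 μ)
    (h : ∀ v, MemLp v 2 μ → 2 * ∫ x, ⟪x, v x⟫ ∂μ ≤ lam * ∫ x, ∫ y, ‖v x - v y‖ ∂μ ∂μ) :
    Cohesive μ lam := by
  refine ⟨fun _ => 0, ⟨.zero, fun v hv => ?_⟩, 0, .rfl⟩
  have h0 : SONJ μ lam (fun _ => 0) = ∫ x, ‖x‖ ^ 2 ∂μ := by simp [SONJ]
  rw [h0, SONJ_eq_of_memLp hid hv]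
  have hv2 : 0 ≤ ∫ x, ‖v x‖ ^ 2 ∂μ := integral_nonneg fun x => by positivity
  linarith [h v hv]

lemma integral_sq_norm_le_SONJ_const [IsFiniteMeasure μ] (hid : MemLp (fun x => x) 2 μ)
    (hcen : ∫ x, x ∂μ = 0) (c : Euc d) :
    ∫ x, ‖x‖ ^ 2 ∂μ ≤ SONJ μ lam (fun _ => c) := by
  have hinner : ∫ x, ⟪x, c⟫ ∂μ = 0 := by
    simp_rw [real_inner_comm c]
    rw [integral_inner (hid.integrable one_le_two), hcen, inner_zero_right]
  rw [SONJ_eq_of_memLp hid (memLp_const c), hinner]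
  simp only [sub_self, norm_zero, integral_zero, integral_const, smul_eq_mul]
  nlinarith [measureReal_nonneg (μ := μ) (s := Set.univ), sq_nonneg ‖c‖]

lemma SONJ_smul_id (s : ℝ) :
    SONJ μ lam (fun x => s • x)
      = (s - 1) ^ 2 * ∫ x, ‖x‖ ^ 2 ∂μ + lam * (|s| * ∫ x, ∫ y, ‖x - y‖ ∂μ ∂μ) := by
  have h1 : ∀ x : Euc d, ‖s • x - x‖ ^ 2 = (s - 1) ^ 2 * ‖x‖ ^ 2 := fun x => by
    rw [show s • x - x = (s - 1) • x by rw [sub_smul, one_smul], norm_smul, mul_pow,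
      Real.norm_eq_abs, sq_abs]
  have h2 : ∀ x y : Euc d, ‖s • x - s • y‖ = |s| * ‖x - y‖ := fun x y => by
    rw [← smul_sub, norm_smul, Real.norm_eq_abs]
  simp only [SONJ, h1, h2, integral_const_mul]

end SumOfNorms

lemma integral_Icc_abs_inv_mul_sub {a b t : ℝ} (ht : t ∈ Set.Icc a b) :
    ∫ s in Set.Icc a b, |t - s|⁻¹ * (t - s) = (t - a) - (b - t) := by
  set f : ℝ → ℝ := fun s => |t - s|⁻¹ * (t - s)
  have hf : ∀ c e, IntervalIntegrable f volume c e := fun c e =>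
    IntervalIntegrable.mono_fun' (g := fun _ => 1) intervalIntegrable_const
      (by fun_prop) (.of_forall fun s => by
        simp only [f, norm_mul, norm_inv, Real.norm_eq_abs, abs_abs]
        exact inv_mul_le_one_of_le₀ le_rfl (abs_nonneg _))
  have hleft : ∫ s in a..t, f s = ∫ _ in a..t, (1 : ℝ) :=
    intervalIntegral.integral_congr_ae ((Measure.ae_ne volume t).mono fun s hst hs => by
      rw [Set.uIoc_of_le ht.1] at hs
      have : 0 < t - s := sub_pos.2 (lt_of_le_of_ne hs.2 hst)
      simp only [f, abs_of_pos this, inv_mul_cancel₀ this.ne'])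
  have hright : ∫ s in t..b, f s = ∫ _ in t..b, (-1 : ℝ) :=
    intervalIntegral.integral_congr_ae (.of_forall fun s hs => by
      rw [Set.uIoc_of_le ht.2] at hs
      have : t - s < 0 := sub_neg.2 hs.1
      simp only [f, abs_of_neg this, inv_neg, neg_mul, inv_mul_cancel₀ this.ne])
  rw [integral_Icc_eq_integral_Ioc, ← intervalIntegral.integral_of_le (ht.1.trans ht.2),
    ← intervalIntegral.integral_add_adjacent_intervals (hf a t) (hf t b), hleft, hright]
  simp only [intervalIntegral.integral_const, smul_eq_mul]
  ring

lemma EuclideanSpace.norm_fin_one (x : Euc 1) : ‖x‖ = |x 0| := by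
  simp [EuclideanSpace.norm_eq, Real.sqrt_sq_eq_abs]

lemma EuclideanSpace.inner_fin_one (x y : Euc 1) : ⟪x, y⟫ = x 0 * y 0 := by
  simp [PiLp.inner_apply, mul_comm]

def intervalMeasure : Measure (Euc 1) :=
  volume.restrict {x : Euc 1 | x 0 ∈ Set.Icc (-(1/2) : ℝ) (1/2)}

namespace intervalMeasure

def coordEquiv : Euc 1 ≃ᵐ ℝ :=
  (MeasurableEquiv.toLp 2 (Fin 1 → ℝ)).symm.trans (MeasurableEquiv.funUnique (Fin 1) ℝ)

lemma measurePreserving_coordEquiv : MeasurePreserving coordEquiv :=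
  (volume_preserving_funUnique (Fin 1) ℝ).comp
    (EuclideanSpace.volume_preserving_symm_measurableEquiv_toLp (Fin 1))

lemma integral_comp_apply_zero {F : Type*} [NormedAddCommGroup F] [NormedSpace ℝ F]
    (g : ℝ → F) :
    ∫ x, g (x 0) ∂intervalMeasure = ∫ t in Set.Icc (-(1/2) : ℝ) (1/2), g t :=
  measurePreserving_coordEquiv.setIntegral_preimage_emb coordEquiv.measurableEmbedding g _

lemma ae_mem : ∀ᵐ x ∂intervalMeasure, x 0 ∈ Set.Icc (-(1/2) : ℝ) (1/2) :=
  ae_restrict_mem (coordEquiv.measurable measurableSet_Icc)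

instance : IsFiniteMeasure intervalMeasure := by
  refine isFiniteMeasure_restrict.2 ?_
  rw [show {x : Euc 1 | x 0 ∈ Set.Icc (-(1/2) : ℝ) (1/2)} = coordEquiv ⁻¹' Set.Icc (-(1/2)) (1/2)
    from rfl, measurePreserving_coordEquiv.measure_preimage measurableSet_Icc.nullMeasurableSet]
  simp

lemma memLp_id : MemLp (fun x => x) 2 intervalMeasure :=
  MemLp.of_bound aestronglyMeasurable_id (1/2) (ae_mem.mono fun x hx => by
    rw [EuclideanSpace.norm_fin_one]; exact abs_le.2 hx)

lemma integral_sq_norm : ∫ x, ‖x‖ ^ 2 ∂intervalMeasure = 1 / 12 := by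
  simp_rw [EuclideanSpace.norm_fin_one, sq_abs]
  rw [integral_comp_apply_zero (fun t => t ^ 2), integral_Icc_eq_integral_Ioc,
    ← intervalIntegral.integral_of_le (by norm_num), integral_pow]
  norm_num

lemma integral_inner_unitSub {x : Euc 1} (hx : x 0 ∈ Set.Icc (-(1/2) : ℝ) (1/2)) (w : Euc 1) :
    ∫ y, ⟪unitSub x y, w⟫ ∂intervalMeasure = 2 * ⟪x, w⟫ := by
  have h : ∀ y : Euc 1, ⟪unitSub x y, w⟫ = |x 0 - y 0|⁻¹ * (x 0 - y 0) * w 0 := fun y => by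
    rw [unitSub, real_inner_smul_left, EuclideanSpace.inner_fin_one,
      EuclideanSpace.norm_fin_one, PiLp.sub_apply, mul_assoc]
  simp_rw [h]
  rw [integral_comp_apply_zero (fun t => |x 0 - t|⁻¹ * (x 0 - t) * w 0), integral_mul_const,
    integral_Icc_abs_inv_mul_sub hx, EuclideanSpace.inner_fin_one]
  ring

lemma integral_integral_inner_unitSub (v : Euc 1 → Euc 1) :
    ∫ x, ∫ y, ⟪unitSub x y, v x⟫ ∂intervalMeasure ∂intervalMeasure
      = 2 * ∫ x, ⟪x, v x⟫ ∂intervalMeasure := by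
  rw [← integral_const_mul]
  exact integral_congr_ae (ae_mem.mono fun x hx => integral_inner_unitSub hx (v x))

lemma four_mul_integral_inner_le {v : Euc 1 → Euc 1} (hv : Integrable v intervalMeasure) :
    4 * ∫ x, ⟪x, v x⟫ ∂intervalMeasure
      ≤ ∫ x, ∫ y, ‖v x - v y‖ ∂intervalMeasure ∂intervalMeasure := by
  have := two_mul_integral_integral_inner_unitSub_le hv
  rw [integral_integral_inner_unitSub] at this
  linarith

lemma integral_id_eq_zero : ∫ x, x ∂intervalMeasure = 0 := by
  have hinner : ∀ c : Euc 1, ⟪∫ x, x ∂intervalMeasure, c⟫ = 0 := fun c => by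
    have h := two_mul_integral_integral_inner_unitSub (μ := intervalMeasure)
      (integrable_const c)
    simp only [sub_self, inner_zero_right, integral_zero, integral_integral_inner_unitSub] at h
    simp_rw [real_inner_comm c] at h
    rw [real_inner_comm, ← integral_inner (memLp_id.integrable one_le_two)]
    linarith
  exact inner_self_eq_zero.1 (hinner _)

lemma integral_integral_norm_sub :
    ∫ x, ∫ y, ‖x - y‖ ∂intervalMeasure ∂intervalMeasure = 1 / 3 := by
  have h := two_mul_integral_integral_inner_unitSub (memLp_id.integrable one_le_two)
  simp only [inner_unitSub_sub, integral_integral_inner_unitSub, real_inner_self_eq_norm_sq,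
    integral_sq_norm] at h
  linarith

lemma cohesive {lam : ℝ} (hlam : 1 / 2 ≤ lam) : Cohesive intervalMeasure lam := by
  refine cohesive_of_two_mul_integral_inner_le memLp_id fun v hv => ?_
  have hD : 0 ≤ ∫ x, ∫ y, ‖v x - v y‖ ∂intervalMeasure ∂intervalMeasure :=
    integral_nonneg fun x => integral_nonneg fun y => norm_nonneg _
  nlinarith [four_mul_integral_inner_le (hv.integrable one_le_two)]

lemma not_cohesive {lam : ℝ} (hlam : lam < 1 / 2) : ¬Cohesive intervalMeasure lam := by
  refine not_cohesive_of_forall_lt (memLp_id.const_smul (1 - 2 * lam)) fun c => ?_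
  calc SONJ intervalMeasure lam (fun x => (1 - 2 * lam) • x) = lam * (1 - lam) / 3 := by
        rw [SONJ_smul_id, integral_sq_norm, integral_integral_norm_sub,
          abs_of_pos (by linarith : (0 : ℝ) < 1 - 2 * lam)]
        ring
    _ < 1 / 12 := by nlinarith [sq_pos_of_pos (by linarith : (0 : ℝ) < 1 - 2 * lam)]
    _ = ∫ x, ‖x‖ ^ 2 ∂intervalMeasure := integral_sq_norm.symm
    _ ≤ SONJ intervalMeasure lam (fun _ => c) :=
        integral_sq_norm_le_SONJ_const memLp_id integral_id_eq_zero c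

end intervalMeasure

/-- **Proposition (interval).**  For `μ` the Lebesgue measure on `[-1/2, 1/2] ⊂ ℝ`,
`λ₁(μ) = 1/2`. -/
theorem stmt14
    (μ : Measure (Euc 1))
    (hμ : μ = volume.restrict {x : Euc 1 | x 0 ∈ Set.Icc (-(1/2) : ℝ) (1/2)}) :
    lambda1 μ = 1 / 2 := by
  obtain rfl : μ = intervalMeasure := hμ
  have hcoh : {lam : ℝ | 0 ≤ lam ∧ Cohesive intervalMeasure lam} = Set.Ici (1 / 2) := by
    ext lam
    refine ⟨fun ⟨_, h⟩ => not_lt.1 fun hlt => intervalMeasure.not_cohesive hlt h,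
      fun h => ⟨by linarith [Set.mem_Ici.1 h], intervalMeasure.cohesive h⟩⟩
  rw [lambda1, hcoh, csInf_Ici]
end
end
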